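/- arXiv:1202.2325 — 3 statements merged into one kernel-verified Lean document; each statement's English description precedes it below -/
import Mathlib

section
/- (Proposition 3.4: multiplicity of χ^{(2n-2,2)} in Ind_C^{S_{2n}} 1_C.) Let n ≥ 2, let σ ∈ Equiv.Perm (Fin (2*n)) be the n-cycle with σ(i) = i+1 mod n for i < n and σ(i) = i for i ≥ n, and let C = Subgroup.centralizer {σ}. Then 2 · Σ_{τ ∈ C} (F 2 τ − F 1 τ) = n² · n! if n is even, and 2 · Σ_{τ ∈ C} (F 2 τ − F 1 τ) = n·(n−1) · n! if n is odd; equivalently, the multiplicity (1/(n·n!))·Σ_{τ∈C}(F 2 τ − F 1 τ) equals n/2 if n is even and (n−1)/2 if n is odd. -/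
/-- `F k τ` is the number of `k`-element subsets of `Fin m` invariant under `τ`. -/
def F {m : ℕ} (k : ℕ) (τ : Equiv.Perm (Fin m)) : ℕ :=
  ((Finset.univ : Finset (Finset (Fin m))).filter
    (fun s => s.card = k ∧ s.image τ = s)).card

/-!
The centralizer of `σ` consists of the permutations that rotate the lower half `{0, …, n-1}` and
permute the upper half arbitrarily, so `C ≃ ℤ/n × Sₙ`. A subset invariant under such a
permutation splits into invariant subsets of the two halves. Since `Sₙ` is transitive on points
and on pairs, Burnside's lemma gives `∑_{π ∈ Sₙ} F₁ π = ∑_{π ∈ Sₙ} F₂ π = n!`, and everything but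
the pairs inside the lower half cancels: `∑_{τ ∈ C} (F₂ τ - F₁ τ) = n! ⬝ ∑_{j ∈ ℤ/n} F₂ (· + j)`.
Finally, a pair `{a, a + d}` is invariant under translation by `j` iff `j = 0`, or `j = d` and
`2d = 0`; the second case contributes one extra pair through each `a` exactly when `n` is even.
-/

open Finset Equiv

theorem Finset.pair_eq_pair_iff {α : Type*} [DecidableEq α] {x y z w : α} :
    ({x, y} : Finset α) = {z, w} ↔ x = z ∧ y = w ∨ x = w ∧ y = z := by
  rw [← coe_inj, coe_pair, coe_pair, Set.pair_eq_pair_iff]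

theorem image_sumCongr_eq_self_iff {α β : Type*} [DecidableEq α] [DecidableEq β]
    (ρ : Perm α) (π : Perm β) (u : Finset (α ⊕ β)) :
    u.image (sumCongr ρ π) = u ↔
      u.toLeft.image ρ = u.toLeft ∧ u.toRight.image π = u.toRight := by
  have hleft : (u.image (sumCongr ρ π)).toLeft = u.toLeft.image ρ := by ext; simp
  have hright : (u.image (sumCongr ρ π)).toRight = u.toRight.image π := by ext; simp
  rw [← sumEquiv.injective.eq_iff, Prod.ext_iff]
  simp [hleft, hright]

section InvariantFinsets

variable {α : Type*} [Fintype α] [DecidableEq α]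

def numInvariantFinsets (k : ℕ) (τ : Perm α) : ℕ :=
  #{s : Finset α | #s = k ∧ s.image τ = s}

theorem F_eq_numInvariantFinsets {m : ℕ} (k : ℕ) (τ : Perm (Fin m)) :
    F k τ = numInvariantFinsets k τ :=
  rfl

theorem numInvariantFinsets_zero (τ : Perm α) : numInvariantFinsets 0 τ = 1 := by
  rw [numInvariantFinsets, card_eq_one]
  exact ⟨∅, by ext s; simp +contextual [card_eq_zero]⟩

theorem numInvariantFinsets_permCongr {β : Type*} [Fintype β] [DecidableEq β] (e : α ≃ β)
    (k : ℕ) (τ : Perm α) :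
    numInvariantFinsets k (e.permCongr τ) = numInvariantFinsets k τ := by
  refine (card_equiv e.finsetCongr fun s => ?_).symm
  have himage : (s.map e.toEmbedding).image (e.permCongr τ) = (s.image τ).map e.toEmbedding := by
    ext; simp [permCongr_apply, e.surjective.exists, e.eq_symm_apply]
  simp [himage, map_inj]

theorem numInvariantFinsets_sumCongr {β : Type*} [Fintype β] [DecidableEq β]
    (ρ : Perm α) (π : Perm β) (k : ℕ) :
    numInvariantFinsets k (sumCongr ρ π) =
      ∑ p ∈ antidiagonal k, numInvariantFinsets p.1 ρ * numInvariantFinsets p.2 π := by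
  simp only [numInvariantFinsets, ← card_product]
  rw [← card_biUnion]
  · refine card_equiv sumEquiv.toEquiv fun u => ?_
    simp [image_sumCongr_eq_self_iff, ← card_toLeft_add_card_toRight]
  · intro p _ q _ hpq
    simp only [disjoint_left, mem_product, mem_filter, mem_univ, true_and]
    rintro ⟨t, u⟩ ⟨⟨ht, -⟩, hu, -⟩ ⟨⟨ht', -⟩, hu', -⟩
    exact hpq (Prod.ext (ht.symm.trans ht') (hu.symm.trans hu'))

/-- Burnside's lemma, with `Perm α` acting transitively on the `k`-subsets of `α`. -/
theorem sum_numInvariantFinsets_eq_factorial {k : ℕ} (hk : k ≤ Fintype.card α) :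
    ∑ π : Perm α, numInvariantFinsets k π = (Fintype.card α).factorial := by
  classical
  have : MulAction.IsPretransitive (Perm α) (Set.powersetCard α k) :=
    Set.powersetCard.isPretransitive
  have hfixed (π : Perm α) :
      Fintype.card (MulAction.fixedBy (Set.powersetCard α k) π) = numInvariantFinsets k π := by
    rw [numInvariantFinsets, ← Fintype.card_subtype]
    refine Fintype.card_congr ((subtypeEquivRight fun s => ?_).trans
      (subtypeSubtypeEquivSubtypeInter (· ∈ Set.powersetCard α k) (fun s => s.image π = s)))
    simp [Subtype.ext_iff, smul_finset_def, Perm.smul_def]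
  have horbits :
      Fintype.card (MulAction.orbitRel.Quotient (Perm α) (Set.powersetCard α k)) = 1 := by
    rw [Fintype.card_eq_one_iff_nonempty_unique, unique_iff_subsingleton_and_nonempty,
      ← MulAction.pretransitive_iff_subsingleton_quotient]
    obtain ⟨s, -, hs⟩ := exists_subset_card_eq (s := (univ : Finset α)) (n := k) (by simpa)
    exact ⟨this, ⟨⟦⟨s, hs⟩⟧⟩⟩
  simp_rw [← hfixed]
  rw [MulAction.sum_card_fixedBy_eq_card_orbits_mul_card_group, horbits, one_mul,
    Fintype.card_perm]

theorem sum_numInvariantFinsets_sumCongr_two_sub_one {β : Type*} [Fintype β] [DecidableEq β]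
    (ρ : Perm α) (hβ : 2 ≤ Fintype.card β) :
    ∑ π : Perm β,
        ((numInvariantFinsets 2 (sumCongr ρ π) : ℤ) - numInvariantFinsets 1 (sumCongr ρ π)) =
      (Fintype.card β).factorial * numInvariantFinsets 2 ρ := by
  have h₁ := sum_numInvariantFinsets_eq_factorial (α := β) (k := 1) (by omega)
  have h₂ := sum_numInvariantFinsets_eq_factorial (α := β) (k := 2) hβ
  simp only [numInvariantFinsets_sumCongr, Nat.sum_antidiagonal_eq_sum_range_succ_mk,
    sum_range_succ, range_zero, sum_empty, Nat.sub_self, Nat.reduceSub, numInvariantFinsets_zero]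
  push_cast
  simp only [sum_add_distrib, sum_sub_distrib, ← mul_sum, sum_const, card_univ, Fintype.card_perm,
    nsmul_eq_mul, ← Nat.cast_sum, h₁, h₂]
  ring

theorem two_mul_numInvariantFinsets_two (τ : Perm α) :
    2 * numInvariantFinsets 2 τ =
      #{p : α × α | p.1 ≠ p.2 ∧ ({p.1, p.2} : Finset α).image τ = {p.1, p.2}} := by
  rw [card_eq_sum_card_fiberwise (f := fun p => ({p.1, p.2} : Finset α))
    (t := {s | #s = 2 ∧ s.image τ = s}), numInvariantFinsets, mul_comm]
  · refine (sum_const_nat fun s hs => ?_).symm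
    obtain ⟨hcard, hinv⟩ := (mem_filter.mp hs).2
    obtain ⟨x, y, hxy, rfl⟩ := card_eq_two.mp hcard
    have hfiber : ({p : α × α | p.1 ≠ p.2 ∧ ({p.1, p.2} : Finset α).image τ = {p.1, p.2}} :
        Finset _).filter (fun p => ({p.1, p.2} : Finset α) = {x, y}) = {(x, y), (y, x)} := by
      ext ⟨a, b⟩
      simp only [mem_filter, mem_univ, true_and, mem_insert, mem_singleton, Prod.mk.injEq,
        pair_eq_pair_iff]
      refine ⟨fun h => h.2, ?_⟩
      rintro (⟨rfl, rfl⟩ | ⟨rfl, rfl⟩)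
      · exact ⟨⟨hxy, hinv⟩, Or.inl ⟨rfl, rfl⟩⟩
      · exact ⟨⟨hxy.symm, by rwa [pair_comm]⟩, Or.inr ⟨rfl, rfl⟩⟩
    rw [hfiber, card_pair (by simp [hxy])]
  · rintro ⟨a, b⟩ h
    simp only [coe_filter, mem_univ, true_and, Set.mem_ofPred_eq] at h ⊢
    exact ⟨card_pair h.1, h.2⟩

end InvariantFinsets

section Translations

variable {G : Type*} [AddCommGroup G] [DecidableEq G]

theorem pair_image_addRight_eq_self_iff (a d j : G) :
    ({a, a + d} : Finset G).image (Equiv.addRight j) = {a, a + d} ↔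
      j = 0 ∨ (j = d ∧ -d = d) := by
  simp only [image_insert, image_singleton, coe_addRight, pair_eq_pair_iff, neg_eq_iff_add_eq_zero]
  constructor
  · rintro (⟨h, -⟩ | ⟨h₁, h₂⟩)
    · exact Or.inl (by simpa using h)
    · obtain rfl : j = d := by simpa using h₁
      exact Or.inr ⟨rfl, by simpa [add_assoc] using h₂⟩
  · rintro (rfl | ⟨rfl, h⟩)
    · simp
    · exact Or.inr ⟨rfl, by rw [add_assoc, h, add_zero]⟩

variable [Fintype G]

theorem card_addRight_fixing_pair (a d : G) :
    #{j : G | a ≠ a + d ∧ ({a, a + d} : Finset G).image (Equiv.addRight j) = {a, a + d}} =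
      (if d ≠ 0 then 1 else 0) + if d ≠ 0 ∧ -d = d then 1 else 0 := by
  simp only [ne_eq, left_eq_add, pair_image_addRight_eq_self_iff]
  by_cases hd : d = 0
  · simp [hd]
  by_cases h : -d = d
  · rw [show ({j : G | ¬d = 0 ∧ (j = 0 ∨ (j = d ∧ -d = d))} : Finset G) = {0, d} by
      ext; simp [hd, h], card_pair (Ne.symm hd)]
    simp [hd, h]
  · rw [show ({j : G | ¬d = 0 ∧ (j = 0 ∨ (j = d ∧ -d = d))} : Finset G) = {0} by
      ext; simp [hd, h], card_singleton]
    simp [hd, h]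

theorem two_mul_sum_numInvariantFinsets_two_addRight :
    2 * ∑ j : G, numInvariantFinsets 2 (Equiv.addRight j) =
      Fintype.card G * (Fintype.card G - 1) + Fintype.card G * #{d : G | d ≠ 0 ∧ -d = d} := by
  have hrow (a : G) :
      ∑ b : G, #{j : G | a ≠ b ∧ ({a, b} : Finset G).image (Equiv.addRight j) = {a, b}} =
        (Fintype.card G - 1) + #{d : G | d ≠ 0 ∧ -d = d} := by
    rw [← Equiv.sum_comp (Equiv.addLeft a)]
    refine (sum_congr rfl fun d _ => card_addRight_fixing_pair a d).trans ?_
    simp only [sum_add_distrib, sum_boole, filter_ne', card_erase_of_mem (mem_univ _), card_univ,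
      Nat.cast_id]
  simp_rw [mul_sum, two_mul_numInvariantFinsets_two, card_filter]
  rw [sum_comm, Fintype.sum_prod_type]
  simp_rw [← card_filter, hrow, sum_const, card_univ, smul_eq_mul, mul_add]

end Translations

theorem card_fin_neg_eq_self (n : ℕ) [NeZero n] :
    #{d : Fin n | d ≠ 0 ∧ -d = d} = if Even n then 1 else 0 := by
  have key (d : Fin n) : d ≠ 0 ∧ -d = d ↔ 2 * (d : ℕ) = n := by
    rw [neg_eq_iff_add_eq_zero, ne_eq, Fin.ext_iff, Fin.ext_iff, Fin.val_add, Fin.val_zero]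
    have := d.isLt
    rcases lt_or_ge ((d : ℕ) + d) n with h | h
    · rw [Nat.mod_eq_of_lt h]; omega
    · rw [Nat.mod_eq_sub_mod h, Nat.mod_eq_of_lt (by omega)]; omega
  simp_rw [key]
  split_ifs with h
  · obtain ⟨k, rfl⟩ := h
    rw [card_eq_one]
    exact ⟨⟨k, by have := NeZero.ne (k + k); omega⟩, by ext d; simp [Fin.ext_iff]; omega⟩
  · rw [card_eq_zero, filter_eq_empty_iff]
    rintro d - hd
    exact h ⟨d, by omega⟩

theorem commute_sumCongr_one_iff {α β : Type*} [Finite α] [Finite β] {c : Perm α}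
    (hc : ∀ x, c x ≠ x) {τ : Perm (α ⊕ β)} :
    Commute τ (sumCongr c 1) ↔ ∃ ρ π, Commute ρ c ∧ τ = sumCongr ρ π := by
  constructor
  · intro hτ
    -- `τ⁻¹` preserves the fixed points `Sum.inr _` of `sumCongr c 1`, so `τ` maps `inl` to `inl`.
    have hinl : Set.MapsTo τ (Set.range Sum.inl) (Set.range Sum.inl) := by
      rintro _ ⟨a, rfl⟩
      rcases h : τ (.inl a) with a' | b
      · exact ⟨a', rfl⟩
      · have hfix : sumCongr c 1 (τ⁻¹ (.inr b)) = τ⁻¹ (.inr b) := by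
          rw [← Perm.mul_apply, ← hτ.inv_left.eq, Perm.mul_apply, sumCongr_apply, Sum.map_inr,
            Perm.coe_one, id]
        rw [Perm.inv_eq_iff_eq.mpr h.symm, sumCongr_apply, Sum.map_inl, Sum.inl.injEq] at hfix
        exact absurd hfix (hc a)
    obtain ⟨⟨ρ, π⟩, rfl⟩ := Perm.mem_sumCongrHom_range_of_perm_mapsTo_inl hinl
    exact ⟨ρ, π, Perm.ext fun a => by simpa using Perm.congr_fun hτ.eq (.inl a), rfl⟩
  · rintro ⟨ρ, π, hρ, rfl⟩
    simp only [Commute, SemiconjBy, Perm.sumCongr_mul, hρ.eq, mul_one, one_mul]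

open Fin.NatCast in
theorem commute_addRight_one_iff {n : ℕ} [NeZero n] {ρ : Perm (Fin n)} :
    Commute ρ (Equiv.addRight 1) ↔ ∃ j, ρ = Equiv.addRight j := by
  constructor
  · intro hρ
    have hnat (k : ℕ) : ρ (k : Fin n) = (k : Fin n) + ρ 0 := by
      induction k with
      | zero => simp
      | succ k ih =>
        have := Perm.congr_fun hρ.eq (k : Fin n)
        simp only [Perm.mul_apply, coe_addRight] at this
        rw [Nat.cast_succ, this, ih, add_right_comm]
    exact ⟨ρ 0, Perm.ext fun x => by rw [← Fin.cast_val_eq_self x, hnat, coe_addRight]⟩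
  · rintro ⟨j, rfl⟩
    exact Perm.ext fun x => by simp [add_right_comm]

theorem mem_centralizer_permCongr_iff {α β : Type*} (e : α ≃ β) (s : Perm α) (τ : Perm β) :
    τ ∈ Subgroup.centralizer {e.permCongr s} ↔ Commute (e.symm.permCongr τ) s := by
  rw [Subgroup.mem_centralizer_singleton_iff, Commute, SemiconjBy,
    ← e.permCongr.injective.eq_iff, permCongr_mul, permCongr_mul, ← permCongr_symm,
    apply_symm_apply, eq_comm]

/-- `Fin (2 * n)` as the lower half, where `σ` rotates, followed by the upper half. -/
def halves (n : ℕ) : Fin n ⊕ Fin n ≃ Fin (2 * n) :=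
  finSumFinEquiv.trans (finCongr (two_mul n).symm)

section Centralizer

variable {n : ℕ} [NeZero n] {σ : Perm (Fin (2 * n))}
  (hσ : ∀ i : Fin (2 * n),
    ((σ i : ℕ) = if (i : ℕ) < n then ((i : ℕ) + 1) % n else (i : ℕ)))
include hσ

theorem eq_permCongr_halves : σ = (halves n).permCongr (sumCongr (Equiv.addRight 1) 1) := by
  ext i
  obtain ⟨z, rfl⟩ := (halves n).surjective i
  rw [permCongr_apply, symm_apply_apply, hσ]
  rcases z with x | y
  · simp [halves, Fin.val_add]
  · simp [halves]

theorem mem_centralizer_iff_exists (hn : 2 ≤ n) {τ : Perm (Fin (2 * n))} :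
    τ ∈ Subgroup.centralizer {σ} ↔
      ∃ j π, (halves n).permCongr (sumCongr (Equiv.addRight j) π) = τ := by
  have hfree (x : Fin n) : Equiv.addRight 1 x ≠ x := by
    simp [Fin.ext_iff]
    omega
  rw [eq_permCongr_halves hσ, mem_centralizer_permCongr_iff, commute_sumCongr_one_iff hfree]
  simp only [commute_addRight_one_iff]
  constructor
  · rintro ⟨_, π, ⟨j, rfl⟩, h⟩
    exact ⟨j, π, by rw [← h, ← permCongr_symm, apply_symm_apply]⟩
  · rintro ⟨j, π, rfl⟩
    exact ⟨_, π, ⟨j, rfl⟩, by rw [← permCongr_symm, symm_apply_apply]⟩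

theorem sum_centralizer_eq {M : Type*} [AddCommMonoid M] (hn : 2 ≤ n)
    [Fintype (Subgroup.centralizer {σ})] (f : Perm (Fin (2 * n)) → M) :
    ∑ τ : Subgroup.centralizer {σ}, f τ =
      ∑ j : Fin n, ∑ π : Perm (Fin n),
        f ((halves n).permCongr (sumCongr (Equiv.addRight j) π)) := by
  let Φ (d : Fin n × Perm (Fin n)) : Subgroup.centralizer {σ} :=
    ⟨_, (mem_centralizer_iff_exists hσ hn).mpr ⟨d.1, d.2, rfl⟩⟩
  have hΦ : Function.Bijective Φ := by
    refine ⟨fun ⟨j, π⟩ ⟨j', π'⟩ h => ?_, fun ⟨τ, hτ⟩ => ?_⟩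
    · have h' := (halves n).permCongr.injective (Subtype.ext_iff.mp h)
      exact Prod.ext (by simpa using Perm.congr_fun h' (.inl 0))
        (Perm.ext fun y => by simpa using Perm.congr_fun h' (.inr y))
    · obtain ⟨j, π, rfl⟩ := (mem_centralizer_iff_exists hσ hn).mp hτ
      exact ⟨(j, π), rfl⟩
  rw [← Fintype.sum_prod_type']
  exact (Fintype.sum_bijective Φ hΦ _ _ fun _ => rfl).symm

end Centralizer

open scoped Classical in
/-- Proposition 3.4: the multiplicity of `χ^{(2n-2,2)}` in `Ind_C^{S_{2n}} 1_C` equals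
`n/2` if `n` is even and `(n-1)/2` if `n` is odd; expressed denominator-free as
`2 ⬝ Σ_{τ ∈ C} (F 2 τ - F 1 τ) = n² ⬝ n!` (n even) resp. `n(n-1) ⬝ n!` (n odd). -/
theorem chi_2n_minus_2_2_multiplicity (n : ℕ) (hn : 2 ≤ n) (σ : Equiv.Perm (Fin (2 * n)))
    (hσ : ∀ i : Fin (2 * n),
      ((σ i : ℕ) = if (i : ℕ) < n then ((i : ℕ) + 1) % n else (i : ℕ))) :
    (Even n →
      2 * ∑ τ : Subgroup.centralizer {σ},
        ((F 2 (τ : Equiv.Perm (Fin (2 * n))) : ℤ)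
          - (F 1 (τ : Equiv.Perm (Fin (2 * n))) : ℤ))
        = (n : ℤ) ^ 2 * n.factorial) ∧
    (Odd n →
      2 * ∑ τ : Subgroup.centralizer {σ},
        ((F 2 (τ : Equiv.Perm (Fin (2 * n))) : ℤ)
          - (F 1 (τ : Equiv.Perm (Fin (2 * n))) : ℤ))
        = (n : ℤ) * ((n : ℤ) - 1) * n.factorial) := by
  have : NeZero n := ⟨by omega⟩
  have hsum : 2 * ∑ τ : Subgroup.centralizer {σ}, ((F 2 (τ : Perm (Fin (2 * n))) : ℤ)
      - (F 1 (τ : Perm (Fin (2 * n))) : ℤ)) =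
      n.factorial * (n * (n - 1) + n * if Even n then 1 else 0) := by
    have hrot := two_mul_sum_numInvariantFinsets_two_addRight (G := Fin n)
    rw [card_fin_neg_eq_self, Fintype.card_fin] at hrot
    rw [sum_centralizer_eq hσ hn (fun τ => (F 2 τ : ℤ) - F 1 τ)]
    simp only [F_eq_numInvariantFinsets, numInvariantFinsets_permCongr]
    rw [sum_congr rfl fun j _ => sum_numInvariantFinsets_sumCongr_two_sub_one (Equiv.addRight j)
      (by rwa [Fintype.card_fin]), ← mul_sum, Fintype.card_fin, mul_left_comm, ← Nat.cast_sum,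
      ← Nat.cast_ofNat (R := ℤ), ← Nat.cast_mul, hrot]
    push_cast [Nat.cast_sub (by omega : 1 ≤ n)]
    ring
  refine ⟨fun he => ?_, fun ho => ?_⟩
  · rw [hsum, if_pos he]; ring
  · rw [hsum, if_neg (Nat.not_even_iff_odd.mpr ho)]; ring
end

section
/- (Equation (17): a single h-term when the hook can be removed.) Let k ≥ 1 and n ≥ 2k, and let h satisfy 1 < h < n, d_h := gcd(n,h) ≠ 1, and (n/d_h) ∣ k; set l_k = k·d_h/n. Let σ ∈ Equiv.Perm (Fin (2*n)) be the n-cycle with σ(i) = i+1 mod n for i < n and σ(i) = i for i ≥ n, and let P be the subgroup of Equiv.Perm (Fin (2*n)) consisting of all permutations π with π(i) = i for every i < n. Then Σ_{π ∈ P} (F k (σ^h * π) − F (k−1) (σ^h * π)) = C(d_h, l_k) · n!, where C(a,b) is the binomial coefficient. -/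
/-!
For `π ∈ P`, the permutation `σ ^ h * π` acts as `σ ^ h` on the lower half `{i | i < n}` and as
`π` on the upper half, so its invariant sets are the unions `A ∪ B` of a `σ ^ h`-invariant `A` in
the lower half and a `π`-invariant `B` in the upper half. Summing over `π` first, a `t`-set `B` in
the upper half is preserved by `t! (n - t)!` elements of `P`, and there are `C(n, t)` such sets;
hence `∑ π ∈ P, F j (σ ^ h * π) = n! * #{σ ^ h-invariant A in the lower half with |A| ≤ j}`, and
the difference in the theorem counts the invariant `A` with `|A| = k`. On the lower half `σ ^ h`
is `x ↦ x + h mod n`, whose orbits are the residue classes modulo `d = gcd n h`, each of size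
`n / d`; a `k`-set that is a union of them is a choice of `k d / n` of the `d` classes.
-/

open Finset Equiv
open scoped Nat

namespace Equiv.Perm

variable {α : Type*}

theorem pred_apply_iff_of_fixes_not {ρ : Perm α} {p : α → Prop}
    (hρ : ∀ x, ¬ p x → ρ x = x) (x : α) : p (ρ x) ↔ p x := by
  refine ⟨fun hρx => ?_, fun hx => ?_⟩
  · by_contra hx
    exact hx (hρ x hx ▸ hρx)
  · by_contra hρx
    exact hρx (by rwa [ρ.injective (hρ _ hρx)])

variable [DecidableEq α]

theorem image_finset_eq_self_iff {τ : Perm α} {S : Finset α} :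
    S.image τ = S ↔ ∀ x ∈ S, τ x ∈ S := by
  refine ⟨fun h x hx => h ▸ mem_image_of_mem τ hx, fun h => ?_⟩
  simpa [map_eq_image] using
    map_eq_of_subset (f := τ.toEmbedding) (s := S) (by simpa [map_eq_image, image_subset_iff])

variable (p : α → Prop)

theorem union_image_mul_eq_self_iff {ρ π : Perm α} (hρ : ∀ x, ¬ p x → ρ x = x)
    (hπ : ∀ x, p x → π x = x) {A B : Finset α} (hA : ∀ x ∈ A, p x) (hB : ∀ x ∈ B, ¬ p x) :
    (A ∪ B).image (ρ * π) = A ∪ B ↔ A.image ρ = A ∧ B.image π = B := by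
  simp_rw [image_finset_eq_self_iff, forall_mem_union, Perm.mul_apply]
  refine and_congr (forall₂_congr fun x hx => ?_) (forall₂_congr fun x hx => ?_)
  · have hρx : p (ρ x) := (pred_apply_iff_of_fixes_not hρ x).mpr (hA x hx)
    rw [hπ x (hA x hx), mem_union, or_iff_left fun h => hB _ h hρx]
  · have hπx : ¬ p (π x) := (pred_apply_iff_of_fixes_not (p := (¬ p ·))
      (fun y hy => hπ y (not_not.mp hy)) x).mpr (hB x hx)
    rw [hρ _ hπx, mem_union, or_iff_right fun h => hπx (hA _ h)]

variable [DecidablePred p] [Fintype α]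

theorem card_fixing_and_image_eq {B : Finset α} (hB : ∀ x ∈ B, ¬ p x) :
    #{π : Perm α | (∀ x, p x → π x = x) ∧ B.image π = B} = (#B)! * (#{x | ¬ p x} - #B)! := by
  -- the permutations preserving `f` fix each `p`-point and preserve `B` and `{x | ¬ p x} \ B`
  set f : α → α ⊕ Bool := fun x => if p x then .inl x else .inr (decide (x ∈ B))
  have key (π : Perm α) : f ∘ π = f ↔ (∀ x, p x → π x = x) ∧ B.image π = B := by
    constructor
    · intro h
      have hx (x : α) : f (π x) = f x := congrFun h x
      refine ⟨fun x hpx => ?_, image_finset_eq_self_iff.mpr fun x hxB => ?_⟩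
      · have := hx x
        simp only [f, hpx, if_true] at this
        split_ifs at this
        simp_all
      · have := hx x
        simp only [f, hB x hxB, hxB, if_false] at this
        split_ifs at this
        simp_all
    · rintro ⟨hπ, hπB⟩
      funext x
      by_cases hpx : p x
      · simp [hπ x hpx]
      · have hpπx : ¬ p (π x) :=
          (pred_apply_iff_of_fixes_not (p := fun x => ¬ p x)
            (fun y hy => hπ y (not_not.mp hy)) x).mpr hpx
        have hmem : π x ∈ B ↔ x ∈ B := by
          conv_lhs => rw [← hπB]
          exact π.injective.mem_finset_image
        simp [f, hpx, hpπx, hmem]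
  have hinl (y : α) : (#{a | f a = .inl y})! = 1 :=
    Nat.factorial_eq_one.mpr <| card_le_one.mpr fun a ha b hb => by
      simp only [f, mem_filter_univ] at ha hb
      split_ifs at ha hb
      aesop
  have hB' : B ⊆ ({x | ¬ p x} : Finset α) := fun x hx => by simpa using hB x hx
  have htrue : #{a | f a = .inr true} = #B := by
    congr 1
    ext a
    by_cases ha : p a
    · simpa [f, ha] using fun haB => hB a haB ha
    · simp [f, ha]
  have hfalse : #{a | f a = .inr false} = #{x | ¬ p x} - #B := by
    rw [← card_sdiff_of_subset hB']
    congr 1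
    ext a
    by_cases ha : p a <;> simp [f, ha]
  have hstab := DomMulAct.stabilizer_card f
  simp_rw [Fintype.card_subtype, key] at hstab
  rw [hstab, Fintype.prod_sum_type, Fintype.prod_bool, prod_eq_one fun y _ => hinl y, htrue,
    hfalse, one_mul]

theorem sum_card_fixing_and_image_eq {t : ℕ} (ht : t ≤ #{x | ¬ p x}) :
    ∑ B ∈ powersetCard t {x | ¬ p x}, #{π : Perm α | (∀ x, p x → π x = x) ∧ B.image π = B}
      = (#{x | ¬ p x})! := by
  rw [sum_congr rfl fun B hB => card_fixing_and_image_eq p fun x hx => by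
      simpa using mem_powersetCard.mp hB |>.1 hx]
  rw [sum_congr rfl fun B hB => by rw [(mem_powersetCard.mp hB).2], sum_const,
    card_powersetCard, smul_eq_mul, ← mul_assoc, Nat.choose_mul_factorial_mul_factorial ht]

end Equiv.Perm

section InvariantSubsets

variable {α : Type*} [DecidableEq α] [Fintype α] (p : α → Prop) [DecidablePred p]

theorem Finset.sum_eq_sum_powerset_filter_union {M : Type*} [AddCommMonoid M]
    (g : Finset α → M) :
    ∑ S, g S = ∑ A ∈ (univ.filter p).powerset, ∑ B ∈ (univ.filter (¬ p ·)).powerset, g (A ∪ B) := by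
  rw [← sum_product']
  refine sum_nbij' (fun S => (S.filter p, S.filter (¬ p ·))) (fun AB => AB.1 ∪ AB.2)
    (fun S _ => by simp [filter_subset_filter]) (by simp)
    (fun S _ => filter_union_filter_not_eq p S) (fun ⟨A, B⟩ hAB => ?_)
    (fun S _ => by rw [filter_union_filter_not_eq])
  simp only [mem_product, mem_powerset, subset_iff, mem_filter_univ] at hAB
  simp only [filter_union, Prod.mk.injEq]
  constructor
  · rw [filter_true_of_mem hAB.1, filter_false_of_mem fun x hx => hAB.2 hx, union_empty]
  · rw [filter_false_of_mem fun x hx => not_not.mpr (hAB.1 hx), filter_true_of_mem hAB.2,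
      empty_union]

theorem sum_card_invariant_mul {ρ : Perm α} (hρ : ∀ x, ¬ p x → ρ x = x) {j : ℕ}
    (hj : j ≤ #{x | ¬ p x}) :
    ∑ π : Perm α with ∀ x, p x → π x = x, #{S : Finset α | #S = j ∧ S.image (ρ * π) = S}
      = (#{x | ¬ p x})! * #{A ∈ (univ.filter p).powerset | A.image ρ = A ∧ #A ≤ j} := by
  set P : Finset (Perm α) := {π | ∀ x, p x → π x = x}
  set L : Finset α := {x | p x}
  set U : Finset α := {x | ¬ p x}
  calc ∑ π ∈ P, #{S : Finset α | #S = j ∧ S.image (ρ * π) = S}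
      = ∑ π ∈ P, ∑ A ∈ L.powerset, ∑ B ∈ U.powerset,
          if A.image ρ = A ∧ #A + #B = j ∧ B.image π = B then 1 else 0 := by
        refine sum_congr rfl fun π hπ => ?_
        rw [card_filter, sum_eq_sum_powerset_filter_union p]
        refine sum_congr rfl fun A hA => sum_congr rfl fun B hB => ?_
        have hA' : ∀ x ∈ A, p x := fun x hx => by simpa [L] using mem_powerset.mp hA hx
        have hB' : ∀ x ∈ B, ¬ p x := fun x hx => by simpa [U] using mem_powerset.mp hB hx
        rw [card_union_of_disjoint (disjoint_left.mpr fun x hxA hxB => hB' x hxB (hA' x hxA))]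
        exact if_congr (by rw [Perm.union_image_mul_eq_self_iff p hρ (mem_filter.mp hπ).2 hA' hB',
          and_left_comm]) rfl rfl
    _ = ∑ A ∈ L.powerset, ∑ B ∈ U.powerset,
          if A.image ρ = A ∧ #A + #B = j
          then #{π : Perm α | (∀ x, p x → π x = x) ∧ B.image π = B} else 0 := by
        rw [sum_comm]
        refine sum_congr rfl fun A _ => ?_
        rw [sum_comm]
        refine sum_congr rfl fun B _ => ?_
        split_ifs with h
        · simp only [h, true_and]
          rw [← card_filter, filter_filter]
        · exact sum_eq_zero fun π _ => if_neg fun h' => h ⟨h'.1, h'.2.1⟩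
    _ = ∑ A ∈ L.powerset, if A.image ρ = A ∧ #A ≤ j then (#U)! else 0 := by
        refine sum_congr rfl fun A _ => ?_
        split_ifs with h
        · rw [← Perm.sum_card_fixing_and_image_eq p (t := j - #A) ((Nat.sub_le j #A).trans hj),
            powersetCard_eq_filter, sum_filter]
          refine sum_congr rfl fun B _ => ?_
          simp only [h.1, true_and]
          congr 1
          apply propext
          omega
        · exact sum_eq_zero fun B _ => if_neg fun h' => h ⟨h'.1, by omega⟩
    _ = (#U)! * #{A ∈ L.powerset | A.image ρ = A ∧ #A ≤ j} := by
        rw [← sum_filter, sum_const, smul_eq_mul, mul_comm]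

theorem sum_card_invariant_mul_sub {ρ : Perm α} (hρ : ∀ x, ¬ p x → ρ x = x) {k : ℕ}
    (hk : 1 ≤ k) (hkU : k ≤ #{x | ¬ p x}) :
    ∑ π : Perm α with ∀ x, p x → π x = x,
      ((#{S : Finset α | #S = k ∧ S.image (ρ * π) = S} : ℤ)
        - #{S : Finset α | #S = k - 1 ∧ S.image (ρ * π) = S})
      = (#{x | ¬ p x})! * #{A ∈ (univ.filter p).powerset | A.image ρ = A ∧ #A = k} := by
  have hsplit : #{A ∈ (univ.filter p).powerset | A.image ρ = A ∧ #A ≤ k}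
      = #{A ∈ (univ.filter p).powerset | A.image ρ = A ∧ #A ≤ k - 1}
        + #{A ∈ (univ.filter p).powerset | A.image ρ = A ∧ #A = k} := by
    rw [← card_union_of_disjoint (disjoint_filter.mpr fun A _ h1 h2 => by omega), ← filter_or]
    exact congrArg card <| filter_congr fun A _ => by
      rw [← and_or_left]
      exact and_congr_right fun _ => by omega
  rw [sum_sub_distrib, ← Nat.cast_sum, ← Nat.cast_sum, sum_card_invariant_mul p hρ hkU,
    sum_card_invariant_mul p hρ ((Nat.sub_le k 1).trans hkU), hsplit]
  push_cast
  ring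

end InvariantSubsets

theorem Nat.exists_add_mul_mod_eq {n h x y : ℕ} (hy : y < n) (hxy : x ≡ y [MOD n.gcd h]) :
    ∃ t, (x + h * t) % n = y := by
  have : NeZero n := ⟨by omega⟩
  obtain ⟨e, he⟩ := (Nat.modEq_iff_dvd.mp hxy)
  -- `gcd n h = n * gcdA n h + h * gcdB n h`, so `h * gcdB n h` is `gcd n h` modulo `n`
  refine ⟨((Nat.gcdB n h * e : ℤ) : ZMod n).val, ?_⟩
  rw [← Nat.mod_eq_of_lt hy, ← ZMod.natCast_eq_natCast_iff']
  have hyx : (y : ZMod n) = x + ((n.gcd h : ℤ) : ZMod n) * e := by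
    have := congrArg (Int.cast : ℤ → ZMod n) he
    push_cast at this ⊢
    linear_combination this
  rw [hyx, Nat.gcd_eq_gcd_ab]
  push_cast
  rw [ZMod.natCast_zmod_val, ZMod.natCast_self]
  ring

theorem Finset.card_filter_saturated_eq_choose {α β : Type*} [DecidableEq α] [DecidableEq β]
    {L : Finset α} {T : Finset β} {f : α → β} {q : ℕ} (hq : 0 < q) (hf : ∀ x ∈ L, f x ∈ T)
    (hfib : ∀ b ∈ T, #{x ∈ L | f x = b} = q) (e : ℕ) :
    #{A ∈ L.powerset | (∀ x ∈ A, ∀ y ∈ L, f y = f x → y ∈ A) ∧ #A = q * e} = (#T).choose e := by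
  have hcard {T'} (hT' : T' ⊆ T) : #{x ∈ L | f x ∈ T'} = q * #T' := by
    rw [card_eq_sum_card_fiberwise (s := {x ∈ L | f x ∈ T'}) (t := T') fun x hx =>
      mem_coe.mpr (mem_filter.mp (mem_coe.mp hx)).2, mul_comm, ← smul_eq_mul,
      ← sum_const]
    refine sum_congr rfl fun b hb => ?_
    rw [filter_filter, ← hfib b (hT' hb)]
    exact congrArg card <| filter_congr fun x _ => ⟨fun h => h.2, fun h => ⟨h ▸ hb, h⟩⟩
  have hsat {A} (hAL : A ⊆ L) (hA : ∀ x ∈ A, ∀ y ∈ L, f y = f x → y ∈ A) :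
      {x ∈ L | f x ∈ A.image f} = A := by
    ext y
    simp only [mem_filter, mem_image]
    exact ⟨fun ⟨hy, x, hx, hxy⟩ => hA x hx y hy hxy.symm, fun hy => ⟨hAL hy, y, hy, rfl⟩⟩
  rw [← card_powersetCard e T]
  symm
  refine card_nbij' (fun T' => {x ∈ L | f x ∈ T'}) (fun A => A.image f) ?_ ?_ ?_ ?_
  · intro T' hT'
    obtain ⟨hT'T, rfl⟩ := mem_powersetCard.mp hT'
    simp only [coe_filter, mem_powerset]
    exact ⟨filter_subset _ _,
      fun x hx y hy hyx => mem_filter.mpr ⟨hy, hyx ▸ (mem_filter.mp hx).2⟩, hcard hT'T⟩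
  · intro A hA
    simp only [coe_filter, mem_powerset, Set.mem_ofPred_eq] at hA
    obtain ⟨hAL, hAsat, hAcard⟩ := hA
    have hT : A.image f ⊆ T := image_subset_iff.mpr fun x hx => hf x (hAL hx)
    refine mem_powersetCard.mpr ⟨hT, ?_⟩
    have := hcard hT
    rw [hsat hAL hAsat, hAcard] at this
    exact (Nat.eq_of_mul_eq_mul_left hq this).symm
  · intro T' hT'
    have hT'T := (mem_powersetCard.mp hT').1
    ext b
    simp only [mem_image, mem_filter]
    refine ⟨fun ⟨x, ⟨_, hx⟩, hxb⟩ => hxb ▸ hx, fun hb => ?_⟩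
    obtain ⟨x, hx⟩ := card_pos.mp (hfib b (hT'T hb) ▸ hq)
    obtain ⟨hxL, rfl⟩ := mem_filter.mp hx
    exact ⟨x, ⟨hxL, hb⟩, rfl⟩
  · intro A hA
    simp only [coe_filter, mem_powerset, Set.mem_ofPred_eq] at hA
    exact hsat hA.1 hA.2.1

theorem Fin.card_filter_lt_mod_eq {m n d c : ℕ} (hnm : n ≤ m) (hd : d ∣ n) (hc : c < d) :
    #{x : Fin m | (x : ℕ) < n ∧ (x : ℕ) % d = c} = n / d := by
  have hmap : ({x : Fin m | (x : ℕ) < n ∧ (x : ℕ) % d = c} : Finset _).map Fin.valEmbedding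
      = {y ∈ range n | y ≡ c [MOD d]} := by
    ext y
    simp only [mem_map, mem_filter, mem_univ, true_and, Fin.valEmbedding_apply, mem_range,
      Nat.ModEq, Nat.mod_eq_of_lt hc]
    exact ⟨fun ⟨x, hx, hxy⟩ => hxy ▸ hx, fun hy => ⟨⟨y, by omega⟩, hy, rfl⟩⟩
  rw [← card_map, hmap, ← Nat.count_eq_card_filter_range, Nat.count_modEq_card _ (by omega),
    Nat.mod_eq_zero_of_dvd hd, if_neg (Nat.not_lt_zero _), add_zero]

def IsLowerHalfRotation (n : ℕ) (σ : Perm (Fin (2 * n))) : Prop :=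
  ∀ i : Fin (2 * n), (σ i : ℕ) = if (i : ℕ) < n then ((i : ℕ) + 1) % n else (i : ℕ)

namespace IsLowerHalfRotation

variable {n : ℕ} {σ : Perm (Fin (2 * n))}

theorem pow_apply_val (hσ : IsLowerHalfRotation n σ) (t : ℕ) (i : Fin (2 * n)) :
    ((σ ^ t) i : ℕ) = if (i : ℕ) < n then ((i : ℕ) + t) % n else (i : ℕ) := by
  induction t generalizing i with
  | zero => split_ifs with hi <;> simp [Nat.mod_eq_of_lt, hi]
  | succ t ih =>
    rw [pow_succ, Perm.mul_apply, ih]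
    by_cases hi : (i : ℕ) < n
    · have hσi : (σ i : ℕ) = ((i : ℕ) + 1) % n := by rw [hσ, if_pos hi]
      rw [if_pos (hσi ▸ Nat.mod_lt _ (by omega)), hσi, Nat.mod_add_mod, if_pos hi, add_assoc,
        add_comm 1 t]
    · rw [hσ, if_neg hi, if_neg hi, if_neg hi]

theorem pow_apply_of_not_lt (hσ : IsLowerHalfRotation n σ) (t : ℕ) (i : Fin (2 * n))
    (hi : ¬ (i : ℕ) < n) : (σ ^ t) i = i :=
  Fin.ext <| by rw [hσ.pow_apply_val, if_neg hi]

theorem image_pow_eq_self_iff (hσ : IsLowerHalfRotation n σ) (h : ℕ) {A : Finset (Fin (2 * n))}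
    (hA : ∀ x ∈ A, (x : ℕ) < n) :
    A.image (σ ^ h) = A ↔
      ∀ x ∈ A, ∀ y : Fin (2 * n), (y : ℕ) < n → (y : ℕ) % n.gcd h = (x : ℕ) % n.gcd h → y ∈ A := by
  rw [Perm.image_finset_eq_self_iff]
  constructor
  · intro hinv x hx y hy hyx
    have hpow (t : ℕ) : (σ ^ (h * t)) x ∈ A := by
      induction t with
      | zero => simpa using hx
      | succ t ih =>
        rw [mul_add, mul_one, add_comm, pow_add, Perm.mul_apply]
        exact hinv _ ih
    obtain ⟨t, ht⟩ := Nat.exists_add_mul_mod_eq hy hyx.symm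
    convert hpow t
    exact Fin.ext <| by rw [hσ.pow_apply_val, if_pos (hA x hx), ht]
  · intro hsat x hx
    have hval := hσ.pow_apply_val h x
    rw [if_pos (hA x hx)] at hval
    refine hsat x hx _ (hval ▸ Nat.mod_lt _ (by omega)) ?_
    rw [hval, Nat.mod_mod_of_dvd _ (Nat.gcd_dvd_left n h), Nat.add_mod,
      Nat.mod_eq_zero_of_dvd (Nat.gcd_dvd_right n h), add_zero, Nat.mod_mod]

theorem card_image_pow_eq_self (hσ : IsLowerHalfRotation n σ) {h k : ℕ} (hn : 0 < n)
    (hdiv : n / n.gcd h ∣ k) :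
    #{A ∈ ({x | (x : ℕ) < n} : Finset (Fin (2 * n))).powerset | A.image (σ ^ h) = A ∧ #A = k}
      = (n.gcd h).choose (k * n.gcd h / n) := by
  set d := n.gcd h
  have hd : d ∣ n := Nat.gcd_dvd_left n h
  have hd0 : 0 < d := Nat.gcd_pos_of_pos_left h hn
  obtain ⟨e, rfl⟩ := hdiv
  have he : n / d * e * d / n = e := by
    rw [mul_right_comm, Nat.div_mul_cancel hd, Nat.mul_div_cancel_left _ hn]
  have hsat := card_filter_saturated_eq_choose
    (L := ({x | (x : ℕ) < n} : Finset (Fin (2 * n)))) (T := range d) (f := fun x => (x : ℕ) % d)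
    (Nat.div_pos (Nat.le_of_dvd hn hd) hd0) (fun x _ => mem_range.mpr (Nat.mod_lt _ hd0))
    (fun c hc => by
      rw [filter_filter]
      exact Fin.card_filter_lt_mod_eq (by omega) hd (mem_range.mp hc)) e
  rw [card_range] at hsat
  rw [he, ← hsat]
  congr 1
  ext A
  simp only [mem_filter, mem_univ, true_and]
  refine and_congr_right fun hA => and_congr_left fun _ => ?_
  exact hσ.image_pow_eq_self_iff h fun x hx => by simpa using mem_powerset.mp hA hx

end IsLowerHalfRotation

theorem eq17_general (n k h : ℕ) (hk : 1 ≤ k) (hn : 2 * k ≤ n)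
    (hdiv : (n / Nat.gcd n h) ∣ k) (σ : Equiv.Perm (Fin (2 * n)))
    (hσ : ∀ i : Fin (2 * n),
      ((σ i : ℕ) = if (i : ℕ) < n then ((i : ℕ) + 1) % n else (i : ℕ))) :
    ∑ π ∈ (Finset.univ : Finset (Equiv.Perm (Fin (2 * n)))).filter
        (fun π => ∀ i : Fin (2 * n), (i : ℕ) < n → π i = i),
      ((F k (σ ^ h * π) : ℤ) - (F (k - 1) (σ ^ h * π) : ℤ))
      = ((Nat.gcd n h).choose (k * Nat.gcd n h / n) : ℤ) * (n.factorial : ℤ) := by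
  have hσ' : IsLowerHalfRotation n σ := hσ
  have hupper : #{i : Fin (2 * n) | ¬ (i : ℕ) < n} = n := by
    have := card_filter_add_card_filter_not (s := univ) fun i : Fin (2 * n) => (i : ℕ) < n
    rw [card_univ, Fintype.card_fin, Fin.card_filter_val_lt] at this
    omega
  have hsum := sum_card_invariant_mul_sub (fun i : Fin (2 * n) => (i : ℕ) < n)
    (hσ'.pow_apply_of_not_lt h) hk (by rw [hupper]; omega)
  rw [hupper, hσ'.card_image_pow_eq_self (by omega) hdiv] at hsum
  unfold F
  convert hsum.trans (mul_comm _ _)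

/-- Equation (17): when `d_h = gcd(n,h) ≠ 1` and `n/d_h ∣ k`,
`Σ_{π ∈ P} (F k (σ^h π) - F (k-1) (σ^h π)) = C(d_h, l_k) ⬝ n!` with `l_k = k⬝d_h/n`. -/
theorem eq17 (n k h : ℕ) (hk : 1 ≤ k) (hn : 2 * k ≤ n)
    (hh1 : 1 < h) (hh2 : h < n) (hd : Nat.gcd n h ≠ 1)
    (hdiv : (n / Nat.gcd n h) ∣ k) (σ : Equiv.Perm (Fin (2 * n)))
    (hσ : ∀ i : Fin (2 * n),
      ((σ i : ℕ) = if (i : ℕ) < n then ((i : ℕ) + 1) % n else (i : ℕ))) :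
    ∑ π ∈ (Finset.univ : Finset (Equiv.Perm (Fin (2 * n)))).filter
        (fun π => ∀ i : Fin (2 * n), (i : ℕ) < n → π i = i),
      ((F k (σ ^ h * π) : ℤ) - (F (k - 1) (σ ^ h * π) : ℤ))
      = ((Nat.gcd n h).choose (k * Nat.gcd n h / n) : ℤ) * (n.factorial : ℤ) :=
  eq17_general n k h hk hn hdiv σ hσ
end

section
/- (Equation (16): a single h-term vanishes when the hook cannot be removed.) Let k ≥ 1 and n ≥ 2k, and let h satisfy 1 < h < n, d_h := gcd(n,h) ≠ 1, and (n/d_h) ∤ k. Let σ ∈ Equiv.Perm (Fin (2*n)) be the n-cycle with σ(i) = i+1 mod n for i < n and σ(i) = i for i ≥ n, and let P be the subgroup of Equiv.Perm (Fin (2*n)) consisting of all permutations π with π(i) = i for every i < n. Then Σ_{π ∈ P} (F k (σ^h * π) − F (k−1) (σ^h * π)) = 0. -/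
/-!
Write `L = {i < n}` and `U = {i ≥ n}`. Since `σ^h` moves only points of `L` and `π ∈ P` only
points of `U`, a `σ^h π`-invariant set is the union of a `σ^h`-invariant subset of `L` and a
`π`-invariant subset of `U`. Summed over `π ∈ P ≅ Perm U`, the number of `π`-invariant
`j`-subsets of `U` is `n!` for every `j ≤ n`, by Burnside's lemma and the transitivity of
`Perm U` on `j`-subsets. Hence `Σ_π F K (σ^h π) = n! · #{σ^h-invariant A ⊆ L : |A| ≤ K}`, and
the difference for `K = k` and `K = k - 1` is `n!` times the number of `σ^h`-invariant
`k`-subsets of `L`. Through `L ≃ ZMod n`, `σ^h` is translation by `h`, whose orbits all have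
size `n / gcd n h`; as this does not divide `k`, there are no such subsets.
-/

open Finset Equiv Equiv.Perm MulAction

theorem addOrderOf_dvd_card_of_image_add_eq {G : Type*} [AddGroup G] [DecidableEq G] {g : G}
    {t : Finset G} (ht : t.image (· + g) = t) : addOrderOf g ∣ #t := by
  have add_mem : ∀ x ∈ t, x + g ∈ t := fun x hx => ht ▸ mem_image_of_mem _ hx
  have add_neg_mem : ∀ x ∈ t, x + -g ∈ t := by
    intro x hx
    obtain ⟨y, hy, rfl⟩ := mem_image.1 (ht.symm ▸ hx)
    simpa using hy
  have add_zsmul_mem : ∀ x ∈ t, ∀ z : ℤ, x + z • g ∈ t := by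
    intro x hx z
    induction z using Int.induction_on with
    | zero => simpa using hx
    | succ i ih => simpa [add_zsmul, add_assoc] using add_mem _ ih
    | pred i ih => simpa [sub_zsmul, sub_eq_add_neg, add_zsmul, add_assoc] using add_neg_mem _ ih
  set H := AddSubgroup.zmultiples g
  have hsat : (t : Set G) =
      QuotientAddGroup.mk ⁻¹' (QuotientAddGroup.mk '' (t : Set G) : Set (G ⧸ H)) := by
    refine (Set.subset_preimage_image _ _).antisymm ?_
    rintro y ⟨x, hx, hxy⟩
    obtain ⟨z, hz⟩ := AddSubgroup.mem_zmultiples_iff.1 (QuotientAddGroup.eq.1 hxy)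
    simpa [hz] using add_zsmul_mem x hx z
  have hcard := Nat.card_congr (QuotientAddGroup.preimageMkEquivAddSubgroupProdSet H
    (QuotientAddGroup.mk '' (t : Set G)))
  rw [← hsat, Nat.card_prod, Nat.card_zmultiples, Nat.card_coe_set_eq,
    Set.ncard_coe_finset] at hcard
  exact Dvd.intro _ hcard.symm

theorem Equiv.Perm.pred_apply_iff_of_forall_not_imp {α : Type*} {p : α → Prop} {π : Perm α}
    (hπ : ∀ x, ¬ p x → π x = x) (x : α) : p (π x) ↔ p x := by
  by_cases hx : p x
  · refine iff_of_true (by_contra fun h => ?_) hx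
    have hfix : π x = x := π.injective (hπ _ h)
    exact h (by rwa [hfix])
  · rw [hπ x hx]

variable {α : Type*} [DecidableEq α]

theorem Finset.image_perm_eq_self_iff (τ : Perm α) (s : Finset α) :
    s.image τ = s ↔ ∀ x ∈ s, τ x ∈ s :=
  ⟨fun h _ hx => h ▸ mem_image_of_mem τ hx, fun h =>
    eq_of_subset_of_card_le (image_subset_iff.2 h) (card_image_of_injective _ τ.injective).ge⟩

def numInvariantSubsets (τ : Perm α) (u : Finset α) (i : ℕ) : ℕ :=
  #{s ∈ u.powersetCard i | s.image τ = s}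

theorem numInvariantSubsets_congr {τ τ' : Perm α} {u : Finset α} (h : ∀ x ∈ u, τ x = τ' x)
    (i : ℕ) : numInvariantSubsets τ u i = numInvariantSubsets τ' u i := by
  refine congrArg card (filter_congr fun s hs => ?_)
  rw [image_congr fun x hx => h x ((mem_powersetCard.1 hs).1 hx)]

theorem numInvariantSubsets_union {τ : Perm α} {u v : Finset α} (huv : Disjoint u v)
    (hu : ∀ x ∈ u, τ x ∈ u) (hv : ∀ x ∈ v, τ x ∈ v) (K : ℕ) :
    numInvariantSubsets τ (u ∪ v) K =
      ∑ ij ∈ antidiagonal K, numInvariantSubsets τ u ij.1 * numInvariantSubsets τ v ij.2 := by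
  simp only [numInvariantSubsets, ← card_product]
  rw [← card_sigma]
  symm
  refine card_nbij' (fun p => p.2.1 ∪ p.2.2) (fun s => ⟨(#(s ∩ u), #(s ∩ v)), (s ∩ u, s ∩ v)⟩)
    ?_ ?_ ?_ ?_
  · rintro ⟨⟨i, j⟩, a, b⟩ h
    simp only [mem_coe, mem_sigma, HasAntidiagonal.mem_antidiagonal, mem_product,
      mem_filter, mem_powersetCard, image_perm_eq_self_iff] at h ⊢
    obtain ⟨rfl, ⟨⟨hau, rfl⟩, ha⟩, ⟨hbv, rfl⟩, hb⟩ := h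
    refine ⟨⟨union_subset_union hau hbv, card_union_of_disjoint (huv.mono hau hbv)⟩, ?_⟩
    intro x hx
    rcases mem_union.1 hx with hx | hx
    · exact mem_union_left _ (ha x hx)
    · exact mem_union_right _ (hb x hx)
  · intro s h
    simp only [mem_coe, mem_sigma, HasAntidiagonal.mem_antidiagonal, mem_product,
      mem_filter, mem_powersetCard, image_perm_eq_self_iff] at h ⊢
    obtain ⟨⟨hsuv, rfl⟩, hs⟩ := h
    refine ⟨?_, ⟨⟨inter_subset_right, trivial⟩, ?_⟩, ⟨inter_subset_right, trivial⟩, ?_⟩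
    · rw [← card_union_of_disjoint (huv.mono inter_subset_right inter_subset_right),
        ← inter_union_distrib_left, inter_eq_left.2 hsuv]
    · simp only [mem_inter]
      exact fun x hx => ⟨hs x hx.1, hu x hx.2⟩
    · simp only [mem_inter]
      exact fun x hx => ⟨hs x hx.1, hv x hx.2⟩
  · rintro ⟨⟨i, j⟩, a, b⟩ h
    simp only [mem_coe, mem_sigma, HasAntidiagonal.mem_antidiagonal, mem_product,
      mem_filter, mem_powersetCard] at h
    obtain ⟨-, ⟨⟨hau, rfl⟩, -⟩, ⟨hbv, rfl⟩, -⟩ := h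
    have hbu : b ∩ u = ∅ := disjoint_iff_inter_eq_empty.1 (huv.mono_right hbv).symm
    have hav : a ∩ v = ∅ := disjoint_iff_inter_eq_empty.1 (huv.mono_left hau)
    simp only [union_inter_distrib_right, inter_eq_left.2 hau, inter_eq_left.2 hbv, hbu, hav,
      union_empty, empty_union]
  · intro s h
    simp only [mem_coe, mem_filter, mem_powersetCard] at h
    simp only [← inter_union_distrib_left, inter_eq_left.2 h.1.1]

theorem Set.powersetCard.perm_smul_eq_self_iff {m : ℕ} (τ : Perm α) (s : Set.powersetCard α m) :
    τ • s = s ↔ (s : Finset α).image τ = s := by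
  rw [← Subtype.coe_inj, Set.powersetCard.coe_smul, smul_finset_def]
  rfl

variable [Fintype α]

theorem numInvariantSubsets_mul {p : α → Prop} [DecidablePred p] {a b : Perm α}
    (ha : ∀ x, ¬ p x → a x = x) (hb : ∀ x, p x → b x = x) (K : ℕ) :
    numInvariantSubsets (a * b) univ K = ∑ ij ∈ antidiagonal K,
      numInvariantSubsets a {x | p x} ij.1 * numInvariantSubsets b {x | ¬ p x} ij.2 := by
  have hb' : ∀ x, ¬ ¬ p x → b x = x := fun x hx => hb x (not_not.1 hx)
  have hab : ∀ x, p x → (a * b) x = a x := fun x hx => by rw [mul_apply, hb x hx]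
  have hab' : ∀ x, ¬ p x → (a * b) x = b x := fun x hx => by
    rw [mul_apply, ha _ (by rwa [pred_apply_iff_of_forall_not_imp hb'])]
  conv_lhs => rw [← filter_union_filter_not_eq p univ]
  rw [numInvariantSubsets_union (disjoint_filter_filter_not _ _ _)]
  · refine sum_congr rfl fun ij _ => ?_
    congr 1 <;> refine numInvariantSubsets_congr (fun x hx => ?_) _ <;> rw [mem_filter] at hx
    exacts [hab x hx.2, hab' x hx.2]
  · simp only [mem_filter, mem_univ, true_and]
    intro x hx
    rwa [hab x hx, pred_apply_iff_of_forall_not_imp ha]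
  · simp only [mem_filter, mem_univ, true_and]
    intro x hx
    rwa [hab' x hx, pred_apply_iff_of_forall_not_imp hb']

theorem numInvariantSubsets_ofSubtype {p : α → Prop} [DecidablePred p] (ρ : Perm (Subtype p))
    (m : ℕ) : numInvariantSubsets (ofSubtype ρ) {x | p x} m = numInvariantSubsets ρ univ m := by
  symm
  refine card_nbij' (fun t => t.map (Function.Embedding.subtype p)) (fun s => s.subtype p)
    ?_ ?_ ?_ ?_
  · intro t ht
    simp only [mem_coe, mem_filter, mem_powersetCard_univ, image_perm_eq_self_iff] at ht
    simp only [mem_coe, mem_filter, mem_powersetCard, image_perm_eq_self_iff, card_map, ht.1]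
    refine ⟨⟨fun x hx => ?_, trivial⟩, fun x hx => ?_⟩ <;>
      obtain ⟨⟨x, hpx⟩, hxt, rfl⟩ := mem_map.1 hx
    · simpa using hpx
    · rw [Function.Embedding.subtype_apply, ofSubtype_apply_coe]
      exact mem_map_of_mem _ (ht.2 _ hxt)
  · intro s hs
    simp only [mem_coe, mem_filter, mem_powersetCard, image_perm_eq_self_iff] at hs
    simp only [mem_coe, mem_filter, mem_powersetCard_univ, image_perm_eq_self_iff]
    have hsp : ∀ x ∈ s, p x := fun x hx => by simpa using hs.1.1 hx
    refine ⟨by rw [card_subtype, filter_true_of_mem hsp, hs.1.2], fun x hx => ?_⟩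
    rw [mem_subtype, ← ofSubtype_apply_coe]
    exact hs.2 _ (mem_subtype.1 hx)
  · intro t _
    ext ⟨x, hx⟩
    simp [hx]
  · intro s hs
    simp only [mem_coe, mem_filter, mem_powersetCard] at hs
    exact subtype_map_of_mem fun x hx => by simpa using hs.1.1 hx

theorem card_fixedBy_powersetCard (τ : Perm α) (m : ℕ)
    [Fintype (fixedBy (Set.powersetCard α m) τ)] :
    Fintype.card (fixedBy (Set.powersetCard α m) τ) = numInvariantSubsets τ univ m := by
  rw [numInvariantSubsets, Fintype.card_subtype]
  refine card_bij (fun s _ => s.1) (fun s hs => ?_) (fun s _ t _ h => Subtype.ext h)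
    (fun s hs => ?_)
  · simp_all [Set.powersetCard.perm_smul_eq_self_iff]
  · simp only [mem_filter, mem_powersetCard_univ] at hs
    exact ⟨⟨s, hs.1⟩, by simpa [Set.powersetCard.perm_smul_eq_self_iff] using hs.2, rfl⟩

theorem sum_numInvariantSubsets_univ {m : ℕ} (hm : m ≤ Fintype.card α) :
    ∑ τ : Perm α, numInvariantSubsets τ univ m = (Fintype.card α).factorial := by
  obtain ⟨s, hs⟩ := (powersetCard_nonempty (s := (univ : Finset α))).2 (by simpa using hm)
  have : Nonempty (Set.powersetCard α m) := ⟨⟨s, (mem_powersetCard.1 hs).2⟩⟩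
  obtain ⟨_⟩ := (pretransitive_iff_unique_quotient_of_nonempty (Perm α) (Set.powersetCard α m)).1
    Set.powersetCard.isPretransitive
  have burnside := sum_card_fixedBy_eq_card_orbits_mul_card_group (Perm α) (Set.powersetCard α m)
  simpa only [card_fixedBy_powersetCard, Fintype.card_unique, Fintype.card_perm, one_mul]
    using burnside

theorem sum_numInvariantSubsets_of_fixing_compl (p : α → Prop) [DecidablePred p] {m : ℕ}
    (hm : m ≤ Fintype.card (Subtype p)) :
    ∑ π ∈ univ.filter (fun π : Perm α => ∀ x, ¬ p x → π x = x),
      numInvariantSubsets π {x | p x} m = (Fintype.card (Subtype p)).factorial := by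
  rw [sum_subtype (p := fun π : Perm α => ∀ x, ¬ p x → π x = x) _ (fun π => by simp),
    ← Equiv.sum_comp (Perm.subtypeEquivSubtypePerm p)]
  simp only [Perm.subtypeEquivSubtypePerm_apply_coe, numInvariantSubsets_ofSubtype]
  exact sum_numInvariantSubsets_univ hm

theorem sum_numInvariantSubsets_mul {p : α → Prop} [DecidablePred p] {a : Perm α}
    (ha : ∀ x, ¬ p x → a x = x) {K : ℕ} (hK : K ≤ Fintype.card {x // ¬ p x}) :
    ∑ π ∈ univ.filter (fun π : Perm α => ∀ x, p x → π x = x),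
        numInvariantSubsets (a * π) univ K =
      (Fintype.card {x // ¬ p x}).factorial *
        ∑ i ∈ range (K + 1), numInvariantSubsets a {x | p x} i := by
  set P := univ.filter (fun π : Perm α => ∀ x, p x → π x = x)
  have hP : P = univ.filter (fun π : Perm α => ∀ x, ¬ ¬ p x → π x = x) := by
    simp only [P, not_not]
  calc ∑ π ∈ P, numInvariantSubsets (a * π) univ K
      = ∑ π ∈ P, ∑ ij ∈ antidiagonal K,
          numInvariantSubsets a {x | p x} ij.1 * numInvariantSubsets π {x | ¬ p x} ij.2 :=
        sum_congr rfl fun π hπ => numInvariantSubsets_mul ha (mem_filter.1 hπ).2 K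
    _ = ∑ ij ∈ antidiagonal K, numInvariantSubsets a {x | p x} ij.1 *
          ∑ π ∈ P, numInvariantSubsets π {x | ¬ p x} ij.2 := by
        rw [sum_comm]
        simp only [mul_sum]
    _ = ∑ ij ∈ antidiagonal K,
          numInvariantSubsets a {x | p x} ij.1 * (Fintype.card {x // ¬ p x}).factorial :=
        sum_congr rfl fun ij hij => by
          rw [hP, sum_numInvariantSubsets_of_fixing_compl (¬ p ·)
            ((HasAntidiagonal.antidiagonal.snd_le hij).trans hK)]
    _ = _ := by
      rw [Nat.sum_antidiagonal_eq_sum_range_succ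
        (fun i _ => numInvariantSubsets a {x | p x} i * (Fintype.card {x // ¬ p x}).factorial),
        ← sum_mul, mul_comm]

theorem F_eq_numInvariantSubsets {m : ℕ} (K : ℕ) (τ : Perm (Fin m)) :
    F K τ = numInvariantSubsets τ univ K := by
  rw [F, numInvariantSubsets]
  congr 1
  ext s
  simp

section Rotation

variable {n : ℕ} {σ : Perm (Fin (2 * n))}

theorem val_pow_apply
    (hσ : ∀ i : Fin (2 * n), (σ i : ℕ) = if (i : ℕ) < n then ((i : ℕ) + 1) % n else (i : ℕ))
    (m : ℕ) (i : Fin (2 * n)) :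
    ((σ ^ m) i : ℕ) = if (i : ℕ) < n then ((i : ℕ) + m) % n else (i : ℕ) := by
  induction m generalizing i with
  | zero => split_ifs with hi <;> simp [Nat.mod_eq_of_lt, hi]
  | succ m ih =>
    rw [pow_succ, mul_apply, ih, hσ]
    by_cases hi : (i : ℕ) < n
    · simp only [hi, if_true, Nat.mod_lt _ (Nat.zero_lt_of_lt hi), Nat.mod_add_mod]
      rw [add_assoc, add_comm 1 m]
    · simp [hi]

theorem pow_apply_of_not_lt
    (hσ : ∀ i : Fin (2 * n), (σ i : ℕ) = if (i : ℕ) < n then ((i : ℕ) + 1) % n else (i : ℕ))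
    (m : ℕ) {i : Fin (2 * n)} (hi : ¬ (i : ℕ) < n) : (σ ^ m) i = i :=
  Fin.ext (by rw [val_pow_apply hσ, if_neg hi])

theorem div_gcd_dvd_card_of_image_pow_eq
    (hσ : ∀ i : Fin (2 * n), (σ i : ℕ) = if (i : ℕ) < n then ((i : ℕ) + 1) % n else (i : ℕ))
    (hn : n ≠ 0) (h : ℕ) {s : Finset (Fin (2 * n))} (hs : ∀ x ∈ s, (x : ℕ) < n)
    (hinv : s.image (σ ^ h) = s) : n / n.gcd h ∣ #s := by
  have : NeZero n := ⟨hn⟩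
  let q : Fin (2 * n) → ZMod n := fun x => ((x : ℕ) : ZMod n)
  have hq : Set.InjOn q s := fun a ha b hb hab => Fin.ext <| by
    simpa [q, ZMod.natCast_eq_natCast_iff', Nat.mod_eq_of_lt (hs a ha),
      Nat.mod_eq_of_lt (hs b hb)] using hab
  have hshift : ∀ x ∈ s, q ((σ ^ h) x) = q x + h := fun x hx => by
    simp [q, val_pow_apply hσ, hs x hx, ZMod.natCast_mod]
  have ht : (s.image q).image (· + (h : ZMod n)) = s.image q :=
    calc (s.image q).image (· + (h : ZMod n))
        = s.image (q ∘ (σ ^ h)) := by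
          rw [image_image]
          exact image_congr fun x hx => (hshift x hx).symm
      _ = (s.image (σ ^ h)).image q := image_image.symm
      _ = s.image q := by rw [hinv]
  rw [← card_image_of_injOn hq, ← ZMod.addOrderOf_coe h hn]
  exact addOrderOf_dvd_card_of_image_add_eq ht

theorem sum_F_pow_mul
    (hσ : ∀ i : Fin (2 * n), (σ i : ℕ) = if (i : ℕ) < n then ((i : ℕ) + 1) % n else (i : ℕ))
    (h : ℕ) {K : ℕ} (hK : K ≤ n) :
    ∑ π ∈ (univ : Finset (Perm (Fin (2 * n)))).filter
        (fun π => ∀ i : Fin (2 * n), (i : ℕ) < n → π i = i), F K (σ ^ h * π) =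
      n.factorial * ∑ i ∈ range (K + 1), numInvariantSubsets (σ ^ h) {x | (x : ℕ) < n} i := by
  have hcard : Fintype.card {x : Fin (2 * n) // ¬ (x : ℕ) < n} = n := by
    rw [Fintype.card_subtype_compl, Fintype.card_subtype, Fin.card_filter_val_lt,
      Fintype.card_fin]
    omega
  have := sum_numInvariantSubsets_mul (p := fun x : Fin (2 * n) => (x : ℕ) < n)
    (fun _ => pow_apply_of_not_lt hσ h) (hK.trans hcard.ge)
  rw [hcard] at this
  simp only [F_eq_numInvariantSubsets]
  -- the two filters carry different, though equal, `Decidable` instances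
  convert this using 3

theorem numInvariantSubsets_pow_eq_zero
    (hσ : ∀ i : Fin (2 * n), (σ i : ℕ) = if (i : ℕ) < n then ((i : ℕ) + 1) % n else (i : ℕ))
    (hn : n ≠ 0) {h k : ℕ} (hk : ¬ n / n.gcd h ∣ k) :
    numInvariantSubsets (σ ^ h) {x | (x : ℕ) < n} k = 0 := by
  refine card_eq_zero.2 (filter_eq_empty_iff.2 fun s hs hinv => hk ?_)
  rw [mem_powersetCard] at hs
  rw [← hs.2]
  exact div_gcd_dvd_card_of_image_pow_eq hσ hn h (fun x hx => by simpa using hs.1 hx) hinv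

end Rotation

theorem eq16_general (n k h : ℕ) (hn : 2 * k ≤ n)
    (hdiv : ¬ (n / Nat.gcd n h) ∣ k) (σ : Equiv.Perm (Fin (2 * n)))
    (hσ : ∀ i : Fin (2 * n),
      ((σ i : ℕ) = if (i : ℕ) < n then ((i : ℕ) + 1) % n else (i : ℕ))) :
    ∑ π ∈ (Finset.univ : Finset (Equiv.Perm (Fin (2 * n)))).filter
        (fun π => ∀ i : Fin (2 * n), (i : ℕ) < n → π i = i),
      ((F k (σ ^ h * π) : ℤ) - (F (k - 1) (σ ^ h * π) : ℤ)) = 0 := by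
  obtain ⟨j, rfl⟩ : ∃ j, k = j + 1 :=
    Nat.exists_eq_add_one.2 (Nat.pos_of_ne_zero fun hk => hdiv (hk ▸ dvd_zero _))
  rw [sum_sub_distrib, ← Nat.cast_sum, ← Nat.cast_sum, sum_F_pow_mul hσ h (by omega),
    sum_F_pow_mul hσ h (by omega), Nat.add_sub_cancel, sum_range_succ _ (j + 1),
    numInvariantSubsets_pow_eq_zero hσ (by omega) hdiv]
  simp

/-- Equation (16): when `d_h = gcd(n,h) ≠ 1` and `n/d_h ∤ k`,
`Σ_{π ∈ P} (F k (σ^h π) - F (k-1) (σ^h π)) = 0`. -/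
theorem eq16 (n k h : ℕ) (hk : 1 ≤ k) (hn : 2 * k ≤ n)
    (hh1 : 1 < h) (hh2 : h < n) (hd : Nat.gcd n h ≠ 1)
    (hdiv : ¬ (n / Nat.gcd n h) ∣ k) (σ : Equiv.Perm (Fin (2 * n)))
    (hσ : ∀ i : Fin (2 * n),
      ((σ i : ℕ) = if (i : ℕ) < n then ((i : ℕ) + 1) % n else (i : ℕ))) :
    ∑ π ∈ (Finset.univ : Finset (Equiv.Perm (Fin (2 * n)))).filter
        (fun π => ∀ i : Fin (2 * n), (i : ℕ) < n → π i = i),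
      ((F k (σ ^ h * π) : ℤ) - (F (k - 1) (σ ^ h * π) : ℤ)) = 0 :=
  eq16_general n k h hn hdiv σ hσ
end
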